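/- Let n ≥ 3 and define G : ℕ → ℕ by G(x) = mex {G(x-s) : s ∈ {2, 4n, 4n+2}, s ≤ x}. Then for all k, m ∈ ℕ with m ≤ n-1 and t ∈ {0,1}, we have G(8nk + 4m + t) = 0. -/
import Mathlib


noncomputable def mex (T : Set ℕ) : ℕ := sInf {k : ℕ | k ∉ T}

def subRec (n : ℕ) (G : ℕ → ℕ) : Prop :=
  ∀ x : ℕ, G x = mex {y : ℕ | ∃ s ∈ ({2, 4*n, 4*n+2} : Set ℕ), s ≤ x ∧ y = G (x - s)}

def passRec (n : ℕ) (G0 G1 : ℕ → ℕ) : Prop :=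
  G1 0 = 0 ∧ G1 1 = 0 ∧
  ∀ x : ℕ, 2 ≤ x →
    G1 x = mex ({y : ℕ | ∃ s ∈ ({2, 4*n, 4*n+2} : Set ℕ), s ≤ x ∧ y = G1 (x - s)} ∪ {G0 x})

/-- The P-positions. -/
def Ppos (n x : ℕ) : Prop := ∃ k r : ℕ, r < 4*n ∧ r % 4 < 2 ∧ x = 8*n*k + r

lemma uniq_mod (n k k' r r' : ℕ) (h1 : r < 8*n) (h2 : r' < 8*n)
    (h : 8*n*k + r = 8*n*k' + r') : r = r' := by
  have e1 : (8*n*k + r) % (8*n) = r := by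
    rw [Nat.mul_add_mod]; exact Nat.mod_eq_of_lt h1
  have e2 : (8*n*k' + r') % (8*n) = r' := by
    rw [Nat.mul_add_mod]; exact Nat.mod_eq_of_lt h2
  rw [← e1, h, e2]

lemma sub_rep {A A' r r' s x : ℕ} (hx : x = A + r) (hs : s ≤ x) (h : x - s = A' + r') :
    A' + (r' + s) = A + r := by omega

lemma rep_sub {A r s x : ℕ} (hx : x = A + r) (hs : s ≤ r) : x - s = A + (r - s) := by omega

lemma main_char (n : ℕ) (hn : 3 ≤ n) (G : ℕ → ℕ) (hG : subRec n G) :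
    ∀ x, G x = 0 ↔ Ppos n x := by
  intro x
  induction x using Nat.strong_induction_on with
  | _ x ih =>
  have hx := hG x
  set T : Set ℕ := {y : ℕ | ∃ s ∈ ({2, 4*n, 4*n+2} : Set ℕ), s ≤ x ∧ y = G (x - s)} with hT
  have hmemT : ∀ y, y ∈ T ↔ ((2 ≤ x ∧ y = G (x-2)) ∨ (4*n ≤ x ∧ y = G (x-4*n)) ∨
      (4*n+2 ≤ x ∧ y = G (x-(4*n+2)))) := by
    intro y
    constructor
    · rintro ⟨s, hs, hsx, rfl⟩
      simp only [Set.mem_insert_iff, Set.mem_singleton_iff] at hs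
      rcases hs with rfl | rfl | rfl
      · exact Or.inl ⟨hsx, rfl⟩
      · exact Or.inr (Or.inl ⟨hsx, rfl⟩)
      · exact Or.inr (Or.inr ⟨hsx, rfl⟩)
    · rintro (⟨h, rfl⟩ | ⟨h, rfl⟩ | ⟨h, rfl⟩)
      · exact ⟨2, by simp, h, rfl⟩
      · exact ⟨4*n, by simp, h, rfl⟩
      · exact ⟨4*n+2, by simp, h, rfl⟩
  have hbig : (G (x-2) + G (x-4*n) + G (x-(4*n+2)) + 1) ∉ T := by
    rw [hmemT]
    rintro (⟨h, he⟩ | ⟨h, he⟩ | ⟨h, he⟩) <;> omega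
  have hmex0 : G x = 0 ↔ 0 ∉ T := by
    rw [hx]
    unfold mex
    constructor
    · intro h h0T
      rcases Nat.sInf_eq_zero.mp h with h' | h'
      · exact h' h0T
      · have : (G (x-2) + G (x-4*n) + G (x-(4*n+2)) + 1) ∈ {k : ℕ | k ∉ T} := hbig
        rw [h'] at this
        exact Set.notMem_empty _ this
    · intro h
      exact Nat.sInf_eq_zero.mpr (Or.inl h)
  have hchar : G x = 0 ↔ ((2 ≤ x → G (x-2) ≠ 0) ∧ (4*n ≤ x → G (x-4*n) ≠ 0) ∧
      (4*n+2 ≤ x → G (x-(4*n+2)) ≠ 0)) := by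
    rw [hmex0, hmemT 0]
    constructor
    · intro h
      refine ⟨fun h2 hg => h (Or.inl ⟨h2, hg.symm⟩),
              fun h2 hg => h (Or.inr (Or.inl ⟨h2, hg.symm⟩)),
              fun h2 hg => h (Or.inr (Or.inr ⟨h2, hg.symm⟩))⟩
    · rintro ⟨a, b, c⟩ (⟨h, he⟩ | ⟨h, he⟩ | ⟨h, he⟩)
      · exact a h he.symm
      · exact b h he.symm
      · exact c h he.symm
  constructor
  · intro h0
    by_contra hP
    have hpos : 0 < 8*n := by omega
    have hdm : 8*n * (x / (8*n)) + x % (8*n) = x := Nat.div_add_mod x (8*n)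
    set k := x / (8*n) with hk
    set r := x % (8*n) with hr
    have hr8 : r < 8*n := Nat.mod_lt x hpos
    have hbad : ¬(r < 4*n ∧ r % 4 < 2) := fun hh => hP ⟨k, r, hh.1, hh.2, hdm.symm⟩
    have himp := hchar.mp h0
    rcases Nat.lt_or_ge (r % 4) 2 with h4 | h4
    · -- r % 4 < 2, so 4*n ≤ r : move 4*n
      have h4n : 4*n ≤ r := by omega
      have hxs : 4*n ≤ x := by omega
      have he : x - 4*n = 8*n*k + (r - 4*n) := rep_sub hdm.symm h4n
      have hPm : Ppos n (x - 4*n) := ⟨k, r - 4*n, by omega, by omega, he⟩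
      have hlt : x - 4*n < x := by omega
      exact himp.2.1 hxs ((ih _ hlt).mpr hPm)
    · rcases Nat.lt_or_ge r (4*n+2) with h5 | h5
      · -- move 2
        have h2r : 2 ≤ r := by omega
        have hxs : 2 ≤ x := by omega
        have he : x - 2 = 8*n*k + (r - 2) := rep_sub hdm.symm h2r
        have hPm : Ppos n (x - 2) := ⟨k, r - 2, by omega, by omega, he⟩
        have hlt : x - 2 < x := by omega
        exact himp.1 hxs ((ih _ hlt).mpr hPm)
      · -- move 4*n+2
        have hxs : 4*n+2 ≤ x := by omega
        have he : x - (4*n+2) = 8*n*k + (r - (4*n+2)) := rep_sub hdm.symm h5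
        have hPm : Ppos n (x - (4*n+2)) := ⟨k, r - (4*n+2), by omega, by omega, he⟩
        have hlt : x - (4*n+2) < x := by omega
        exact himp.2.2 hxs ((ih _ hlt).mpr hPm)
  · rintro ⟨k, r, hr4n, hr4, hxe⟩
    apply hchar.mpr
    refine ⟨?_, ?_, ?_⟩
    · intro h2 hg0
      have hlt : x - 2 < x := by omega
      obtain ⟨k', r', h1', h2', he'⟩ := (ih _ hlt).mp hg0
      have heq : 8*n*k' + (r' + 2) = 8*n*k + r := sub_rep hxe h2 he'
      have := uniq_mod n k' k (r' + 2) r (by omega) (by omega) heq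
      omega
    · intro h2 hg0
      have hlt : x - 4*n < x := by omega
      obtain ⟨k', r', h1', h2', he'⟩ := (ih _ hlt).mp hg0
      have heq : 8*n*k' + (r' + 4*n) = 8*n*k + r := sub_rep hxe h2 he'
      have := uniq_mod n k' k (r' + 4*n) r (by omega) (by omega) heq
      omega
    · intro h2 hg0
      have hlt : x - (4*n+2) < x := by omega
      obtain ⟨k', r', h1', h2', he'⟩ := (ih _ hlt).mp hg0
      have heq : 8*n*k' + (r' + (4*n+2)) = 8*n*k + r := sub_rep hxe h2 he'
      have hr'le : r' ≤ 4*n - 3 := by omega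
      have := uniq_mod n k' k (r' + (4*n+2)) r (by omega) (by omega) heq
      omega

theorem stmt (n : ℕ) (hn : 3 ≤ n) (G : ℕ → ℕ) (hG : subRec n G) :
    ∀ k m t : ℕ, m ≤ n - 1 → (t = 0 ∨ t = 1) → G (8*n*k + 4*m + t) = 0 := by
  intro k m t hm ht
  apply (main_char n hn G hG _).mpr
  exact ⟨k, 4*m + t, by omega, by omega, by ring⟩
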